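/- arXiv:1109.4475 — 2 statements merged into one kernel-verified Lean document; each statement's English description precedes it below -/
import Mathlib

section
/- Let D be a directed graph with a complete source c, and let T be a spanning directed rooted tree of D with root r in which c is not the root. Let x be the unique vertex with edge x→y in T for some vertex y ≠ r with x ≠ c. If c is not below y in T, then T with edge x→y replaced by c→y is again a spanning directed rooted tree of D. -/
/-- `IsDipath T a b p` : `p` is the list of successive vertices (after `a`) of a
directed path from `a` to `b` using edges of the relation `T`. -/
def IsDipath {V : Type} (T : V → V → Prop) : V → V → List V → Prop
  | a, b, [] => a = b
  | a, b, c :: p => T a c ∧ IsDipath T c b p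

/-- `T` is a spanning directed rooted tree of the digraph `E` with root `r`:
its edges are edges of `E` and every vertex is reached by a unique directed path from `r`. -/
def IsSpanningDitree {V : Type} (E T : V → V → Prop) (r : V) : Prop :=
  (∀ x y, T x y → E x y) ∧ ∀ x : V, ∃! p : List V, IsDipath T r x p

/-- The edge relation associated to a finite set of directed edges. -/
def edgeRel {V : Type} [DecidableEq V] (F : Finset (V × V)) : V → V → Prop :=
  fun x y => (x, y) ∈ F

/-- A finite set of directed edges is a directed forest in the digraph `E`:
all edges belong to `E`, every vertex has in-degree at most one, and there are
no directed cycles.  (Equivalently, it is a disjoint union of directed rooted trees.) -/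
def IsDirectedForest {V : Type} [DecidableEq V] (E : V → V → Prop) (F : Finset (V × V)) : Prop :=
  (∀ e ∈ F, E e.1 e.2) ∧
  (∀ x y y' : V, (y, x) ∈ F → (y', x) ∈ F → y = y') ∧
  ∀ (x : V) (p : List V), p ≠ [] → ¬ IsDipath (edgeRel F) x x p

/-- A facet of the complex of directed trees `Δ(E)`: a maximal directed forest. -/
def IsFacet {V : Type} [DecidableEq V] (E : V → V → Prop) (F : Finset (V × V)) : Prop :=
  IsDirectedForest E F ∧ ∀ F', IsDirectedForest E F' → F ⊆ F' → F' = F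

/-- `u` is below `v` in the rooted tree `T`: there is a directed path from `v` to `u`. -/
def Below {V : Type} (T : V → V → Prop) (u v : V) : Prop :=
  ∃ p : List V, IsDipath T v u p

/-! Every vertex other than `r` keeps exactly one parent, and `r` still has none, so paths from
`r` stay unique; only existence needs an argument. A vertex `z` not below `y` keeps its old path,
which avoids `y`. A vertex `z` below `y` is reached by the old path to `c`, which avoids `y`
because `c` is not below `y`, followed by the new edge `c → y` and the old path from `y` to `z`,
which cannot return to `y` since `T` has no directed cycles. -/

section Dipath

variable {V : Type} {R R' : V → V → Prop}

theorem isDipath_append (p q : List V) (a b : V) :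
    IsDipath R a b (p ++ q) ↔ ∃ m, IsDipath R a m p ∧ IsDipath R m b q := by
  induction p generalizing a with
  | nil => exact ⟨fun h => ⟨a, rfl, h⟩, fun ⟨_, ham, h⟩ => ham ▸ h⟩
  | cons d p ih =>
    simp only [List.cons_append, IsDipath, ih]
    exact ⟨fun ⟨had, m, hp, hq⟩ => ⟨m, ⟨had, hp⟩, hq⟩,
      fun ⟨m, ⟨had, hp⟩, hq⟩ => ⟨had, m, hp, hq⟩⟩

theorem isDipath_concat {p : List V} {a b d : V} :
    IsDipath R a b (p ++ [d]) ↔ d = b ∧ ∃ m, IsDipath R a m p ∧ R m d := by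
  simp only [isDipath_append, IsDipath]
  constructor
  · rintro ⟨m, hp, hmd, rfl⟩
    exact ⟨rfl, m, hp, hmd⟩
  · rintro ⟨rfl, m, hp, hmd⟩
    exact ⟨m, hp, hmd, rfl⟩

theorem IsDipath.target_unique {p : List V} {a b b' : V} (h : IsDipath R a b p)
    (h' : IsDipath R a b' p) : b = b' := by
  induction p generalizing a with
  | nil => exact h.symm.trans h'
  | cons d p ih => exact ih h.2 h'.2

theorem IsDipath.mono_of_mem {p : List V} {a b : V} (hRR' : ∀ u v, v ∈ p → R u v → R' u v)
    (h : IsDipath R a b p) : IsDipath R' a b p := by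
  induction p generalizing a with
  | nil => exact h
  | cons d p ih =>
    exact ⟨hRR' a d List.mem_cons_self h.1,
      ih (fun u v hv => hRR' u v (List.mem_cons_of_mem d hv)) h.2⟩

theorem IsDipath.below_of_mem {p : List V} {a b v : V} (h : IsDipath R a b p) (hv : v ∈ p) :
    Below R b v := by
  obtain ⟨s, t, rfl⟩ := List.append_of_mem hv
  obtain ⟨_, -, -, ht⟩ := (isDipath_append s (v :: t) a b).mp h
  exact ⟨t, ht⟩

theorem IsDipath.eq_of_parent_unique {r z : V} (hpar : ∀ w w' v, R w v → R w' v → w = w')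
    (hr : ∀ w, ¬ R w r) {p p' : List V} (h : IsDipath R r z p) (h' : IsDipath R r z p') :
    p = p' := by
  induction p using List.reverseRecOn generalizing z p' with
  | nil =>
    cases h
    rcases p'.eq_nil_or_concat with rfl | ⟨q', d', rfl⟩
    · rfl
    · obtain ⟨rfl, m', -, hm'⟩ := isDipath_concat.mp (List.concat_eq_append ▸ h')
      exact (hr m' hm').elim
  | append_singleton q d ih =>
    obtain ⟨rfl, m, hq, hm⟩ := isDipath_concat.mp h
    rcases p'.eq_nil_or_concat with rfl | ⟨q', d', rfl⟩
    · cases h'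
      exact (hr m hm).elim
    · obtain ⟨rfl, m', hq', hm'⟩ := isDipath_concat.mp (List.concat_eq_append ▸ h')
      obtain rfl := hpar _ _ _ hm hm'
      rw [ih hq hq', List.concat_eq_append]

end Dipath

namespace IsSpanningDitree

variable {V : Type} {E T : V → V → Prop} {r : V}

theorem parent_unique (hT : IsSpanningDitree E T r) (w w' z : V) (h : T w z) (h' : T w' z) :
    w = w' := by
  obtain ⟨pw, hpw, -⟩ := hT.2 w
  obtain ⟨pw', hpw', -⟩ := hT.2 w'
  obtain ⟨_, -, hz⟩ := hT.2 z
  have hpaths : pw ++ [z] = pw' ++ [z] :=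
    (hz _ (isDipath_concat.mpr ⟨rfl, w, hpw, h⟩)).trans
      (hz _ (isDipath_concat.mpr ⟨rfl, w', hpw', h'⟩)).symm
  obtain rfl : pw = pw' := List.append_cancel_right hpaths
  exact hpw.target_unique hpw'

theorem eq_nil_of_isDipath_self (hT : IsSpanningDitree E T r) {v : V} {p : List V}
    (h : IsDipath T v v p) : p = [] := by
  obtain ⟨pv, hpv, hv⟩ := hT.2 v
  have hpaths : pv ++ p = pv :=
    (hv _ ((isDipath_append pv p r v).mpr ⟨v, hpv, h⟩)).trans (hv _ hpv).symm
  simpa using hpaths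

theorem not_rel_root (hT : IsSpanningDitree E T r) (w : V) : ¬ T w r := fun hw =>
  let ⟨_, hpw, _⟩ := hT.2 w
  List.concat_ne_nil _ _ (hT.eq_nil_of_isDipath_self (isDipath_concat.mpr ⟨rfl, w, hpw, hw⟩))

theorem not_mem_of_isDipath (hT : IsSpanningDitree E T r) {v b : V} {q : List V}
    (h : IsDipath T v b q) : v ∉ q := by
  intro hv
  obtain ⟨s, t, rfl⟩ := List.append_of_mem hv
  obtain ⟨m, hs, hmv, -⟩ := (isDipath_append s (v :: t) v b).mp h
  exact List.concat_ne_nil _ _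
    (hT.eq_nil_of_isDipath_self (isDipath_concat.mpr ⟨rfl, m, hs, hmv⟩))

theorem of_parent_unique (hE : ∀ a b, T a b → E a b)
    (hpar : ∀ w w' v, T w v → T w' v → w = w') (hr : ∀ w, ¬ T w r) (hreach : ∀ z, ∃ p, IsDipath T r z p) : IsSpanningDitree E T r :=
  ⟨hE, fun z =>
    let ⟨p, hp⟩ := hreach z
    ⟨p, hp, fun _ hp' => IsDipath.eq_of_parent_unique hpar hr hp' hp⟩⟩

end IsSpanningDitree

section ReplaceEdge

variable {V : Type} {T : V → V → Prop} {x y c : V}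

def replaceEdge (T : V → V → Prop) (x y c : V) : V → V → Prop :=
  fun a b => (T a b ∧ ¬(a = x ∧ b = y)) ∨ (a = c ∧ b = y)

theorem replaceEdge_parent_unique (hpar : ∀ w w' v, T w v → T w' v → w = w') (hxy : T x y)
    (w w' z : V) (h : replaceEdge T x y c w z) (h' : replaceEdge T x y c w' z) : w = w' := by
  rcases h with ⟨h, hn⟩ | ⟨rfl, rfl⟩ <;> rcases h' with ⟨h', hn'⟩ | ⟨rfl, hzy⟩
  · exact hpar _ _ _ h h'
  · exact (hn ⟨hpar _ _ _ (hzy ▸ h) hxy, hzy⟩).elim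
  · exact (hn' ⟨hpar _ _ _ h' hxy, rfl⟩).elim
  · rfl

theorem replaceEdge_not_rel_root (hr : ∀ w, ¬ T w r) (hyr : y ≠ r) (w : V) :
    ¬ replaceEdge T x y c w r := by
  rintro (⟨h, -⟩ | ⟨-, rfl⟩)
  exacts [hr w h, hyr rfl]

theorem IsDipath.replaceEdge_of_not_mem {p : List V} {a b : V} (h : IsDipath T a b p)
    (hy : y ∉ p) : IsDipath (replaceEdge T x y c) a b p :=
  h.mono_of_mem fun _ _ hv huv => Or.inl ⟨huv, fun hxy => hy (hxy.2 ▸ hv)⟩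

theorem IsSpanningDitree.reachable_replaceEdge {E : V → V → Prop} {r : V}
    (hT : IsSpanningDitree E T r) (hbelow : ¬ Below T c y) (z : V) :
    ∃ p, IsDipath (replaceEdge T x y c) r z p := by
  by_cases hz : Below T z y
  · obtain ⟨q, hq⟩ := hz
    obtain ⟨pc, hpc, -⟩ := hT.2 c
    have hpc' := hpc.replaceEdge_of_not_mem (x := x) (c := c)
      fun hy => hbelow (hpc.below_of_mem hy)
    have hq' := hq.replaceEdge_of_not_mem (x := x) (c := c) (hT.not_mem_of_isDipath hq)
    exact ⟨pc ++ y :: q,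
      (isDipath_append _ _ r z).mpr ⟨c, hpc', Or.inr ⟨rfl, rfl⟩, hq'⟩⟩
  · obtain ⟨pz, hpz, -⟩ := hT.2 z
    exact ⟨pz, hpz.replaceEdge_of_not_mem fun hy => hz (hpz.below_of_mem hy)⟩

end ReplaceEdge

theorem exchange_not_below_general {V : Type} (E T : V → V → Prop) (c r x y : V)
    (hsource : ∀ z : V, z ≠ c → E c z)
    (hT : IsSpanningDitree E T r)
    (hxy : T x y) (hyr : y ≠ r)
    (hbelow : ¬ Below T c y) :
    IsSpanningDitree E (fun a b => (T a b ∧ ¬(a = x ∧ b = y)) ∨ (a = c ∧ b = y)) r := by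
  have hyc : y ≠ c := fun h => hbelow ⟨[], h⟩
  refine IsSpanningDitree.of_parent_unique (T := replaceEdge T x y c) ?_
    (replaceEdge_parent_unique hT.parent_unique hxy)
    (replaceEdge_not_rel_root hT.not_rel_root hyr)
    (hT.reachable_replaceEdge hbelow)
  rintro a b (⟨h, -⟩ | ⟨rfl, rfl⟩)
  · exact hT.1 a b h
  · exact hsource b hyc

/-- Let `D` (edge relation `E`) have a complete source `c`, let `T` be a spanning directed
rooted tree with root `r` in which `c` is not the root, and let `x → y` be an edge of `T`
with `y ≠ r` and `x ≠ c`.  If `c` is not below `y` in `T`, then replacing the edge `x → y`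
by `c → y` again yields a spanning directed rooted tree of `D` (with root `r`). -/
theorem exchange_not_below {V : Type} (E T : V → V → Prop) (c r x y : V)
    (hsource : ∀ z : V, z ≠ c → E c z)
    (hT : IsSpanningDitree E T r) (hcr : c ≠ r)
    (hxy : T x y) (hyr : y ≠ r) (hxc : x ≠ c)
    (hbelow : ¬ Below T c y) :
    IsSpanningDitree E (fun a b => (T a b ∧ ¬(a = x ∧ b = y)) ∨ (a = c ∧ b = y)) r :=
  exchange_not_below_general E T c r x y hsource hT hxy hyr hbelow
end

section
/- If D is the double directed graph of an (undirected) essentially-tree, i.e., D becomes an undirected tree when replacing pairs of opposite directed edges (or single directed edges) by undirected edges, then the complex of directed trees Δ(D) is vertex decomposable. -/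
/-- Vertex decomposability of an abstract simplicial complex, given as the predicate `K`
of its faces: `K` is (empty or) a simplex, or it has a shedding vertex `v` (no face of the
link of `v` is a facet of the deletion of `v`) whose deletion and link are both vertex
decomposable. -/
inductive VertexDecomposable {α : Type} [DecidableEq α] : (Finset α → Prop) → Prop
  | ofEmpty (K : Finset α → Prop) (h : ∀ F, ¬ K F) : VertexDecomposable K
  | ofSimplex (K : Finset α → Prop) (S : Finset α) (h : ∀ F, K F ↔ F ⊆ S) :
      VertexDecomposable K
  | shed (K : Finset α → Prop) (v : α)
      (hshed : ∀ F : Finset α, v ∉ F → K (insert v F) →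
        ∃ F' : Finset α, K F' ∧ v ∉ F' ∧ F ⊂ F')
      (hdel : VertexDecomposable (fun F => K F ∧ v ∉ F))
      (hlink : VertexDecomposable (fun F => v ∉ F ∧ K (insert v F))) :
      VertexDecomposable K

/-!
Let `ED` be a finite set of directed edges whose underlying graph is acyclic. Such a digraph has
no directed cycles other than 2-cycles, so `F ⊆ ED` is a directed forest iff all in-degrees in `F`
are at most one and `F` contains no two opposite edges. Consequently the deletion of an edge
`(s, t)` from `Δ(ED)` is `Δ(ED \ {(s, t)})`, and its link is `Δ` of `ED` without the edges into `t`
and without `(t, s)`: both are complexes of the same kind on fewer edges. At a leaf `v` of the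
underlying forest, with neighbour `u`, there is either a shedding edge (`(v, u)` when both
orientations are present, otherwise an in-edge `(y, u)` of `u` other than `(v, u)`) or an edge that
can be added to every forest, so that `Δ(ED)` is a cone over the deletion of that edge. Induction
on the number of edges finishes the proof.
-/

open SimpleGraph

namespace VertexDecomposable

variable {α : Type} [DecidableEq α]

theorem of_iff {K K' : Finset α → Prop} (hK : VertexDecomposable K) (h : ∀ F, K F ↔ K' F) :
    VertexDecomposable K' :=
  (funext fun F => propext (h F) : K = K') ▸ hK

/-- The cone with apex `a` over the complex `D` (which does not use `a`) is `F ↦ D (F.erase a)`. -/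
theorem erase {D : Finset α → Prop} (hD : VertexDecomposable D) (a : α)
    (ha : ∀ F, D F → a ∉ F) : VertexDecomposable fun F => D (F.erase a) := by
  induction hD with
  | ofEmpty D h => exact ofEmpty _ fun F => h _
  | ofSimplex D S h =>
    exact ofSimplex _ (insert a S) fun F => by rw [h, ← Finset.subset_insert_iff]
  | shed D v hshed hdel hlink ihdel ihlink =>
    by_cases hva : v = a
    · subst hva
      exact (ihdel fun F hF => hF.2).of_iff fun F => and_iff_left (Finset.notMem_erase v F)
    refine shed _ v (fun F hvF hF => ?_) ((ihdel fun F hF => ha F hF.1).of_iff fun F => ?_)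
      ((ihlink fun F hF haF => ha _ hF.2 (Finset.mem_insert_of_mem haF)).of_iff fun F => ?_)
    · rw [Finset.erase_insert_of_ne hva] at hF
      obtain ⟨F', hF', hvF', hFF'⟩ :=
        hshed (F.erase a) (fun h => hvF (Finset.mem_of_mem_erase h)) hF
      have haF' : a ∉ F' := ha F' hF'
      refine ⟨insert a F', by rwa [Finset.erase_insert haF'], ?_, ?_⟩
      · simp [hva, hvF']
      · grind
    · simp [Finset.mem_erase, hva]
    · rw [Finset.erase_insert_of_ne hva]
      simp [Finset.mem_erase, hva]

theorem of_cone {K : Finset α → Prop} (a : α) (hdel : VertexDecomposable fun F => K F ∧ a ∉ F)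
    (hcone : ∀ F, K F ↔ K (F.erase a)) : VertexDecomposable K :=
  (hdel.erase a fun _ hF => hF.2).of_iff fun F => by rw [hcone F]; simp

end VertexDecomposable

def IsSheddingVertex {α : Type} [DecidableEq α] (K : Finset α → Prop) (v : α) : Prop :=
  ∀ F, v ∉ F → K (insert v F) → ∃ F', K F' ∧ v ∉ F' ∧ F ⊂ F'

theorem IsSheddingVertex.of_exchange {α : Type} [DecidableEq α] {K : Finset α → Prop} {v w : α}
    (hwv : w ≠ v) (h : ∀ F, v ∉ F → K (insert v F) → w ∉ F ∧ K (insert w F)) :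
    IsSheddingVertex K v := fun F hvF hF =>
  ⟨insert w F, (h F hvF hF).2, by simp [hwv.symm, hvF], Finset.ssubset_insert (h F hvF hF).1⟩

section Dipath

variable {V : Type} {T T' : V → V → Prop}

theorem IsDipath.mono (h : ∀ x y, T x y → T' x y) :
    ∀ {a b : V} {p : List V}, IsDipath T a b p → IsDipath T' a b p
  | _, _, [], hp => hp
  | _, _, _ :: _, hp => ⟨h _ _ hp.1, IsDipath.mono h hp.2⟩

/-- A directed path along an asymmetric relation inside an acyclic graph never backtracks,
so it is a path of the graph. -/
theorem IsDipath.exists_isPath {G : SimpleGraph V} (hG : G.IsAcyclic)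
    (hadj : ∀ x y, T x y → G.Adj x y) (hasymm : ∀ x y, T x y → ¬ T y x) :
    ∀ {a b : V} {p : List V}, IsDipath T a b p → ∃ W : G.Walk a b, W.IsPath ∧ W.support = a :: p
  | a, _, [], hp => by subst hp; exact ⟨Walk.nil, by simp, rfl⟩
  | a, b, c :: p, ⟨hac, hp⟩ => by
    obtain ⟨W, hW, hWs⟩ := hp.exists_isPath hG hadj hasymm
    refine ⟨.cons (hadj _ _ hac) W, hW.cons fun haW => ?_, by simp [hWs]⟩
    cases W with
    | nil => exact (hadj _ _ hac).ne (by simpa using haW)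
    | @cons _ d _ hcd W' =>
      have had : a = d := by simpa using hG.eq_snd_of_adj_start hW (hadj _ _ hac).symm haW
      subst had
      rw [Walk.support_cons, List.cons.injEq, ← W'.cons_tail_support] at hWs
      rw [← hWs.2] at hp
      exact hasymm _ _ hac hp.1

theorem not_isDipath_self_of_isAcyclic {G : SimpleGraph V} (hG : G.IsAcyclic)
    (hadj : ∀ x y, T x y → G.Adj x y) (hasymm : ∀ x y, T x y → ¬ T y x) {a : V} {p : List V}
    (hp : p ≠ []) : ¬ IsDipath T a a p := fun h => by
  obtain ⟨W, hW, hWs⟩ := h.exists_isPath hG hadj hasymm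
  rw [Walk.nil_iff_support_eq.mp (Walk.isPath_iff_nil.mp hW)] at hWs
  exact hp (List.cons.inj hWs).2.symm

end Dipath

theorem SimpleGraph.IsAcyclic.exists_adj_forall_adj_eq {V : Type} [Finite V] {H : SimpleGraph V}
    (hH : H.IsAcyclic) {a b : V} (hab : H.Adj a b) : ∃ u v, H.Adj v u ∧ ∀ w, H.Adj v w → w = u := by
  have : Nonempty V := ⟨a⟩
  obtain ⟨u, v, p, hp, hmax⟩ := Walk.exists_isPath_forall_isPath_length_le_length H
  have hp_pos : 1 ≤ p.length := hmax a b (.cons hab .nil) (by simp [hab.ne])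
  have hnil : ¬ p.Nil := fun h => by simp [h.length_eq_zero] at hp_pos
  refine ⟨p.snd, u, p.adj_snd hnil, fun w huw => hH.eq_snd_of_adj_start hp huw ?_⟩
  by_contra hw
  have := hmax w v (p.cons huw.symm) (hp.cons hw)
  simp at this

section Forest

variable {V : Type} [DecidableEq V] {E : V → V → Prop} {ED F F' : Finset (V × V)} {s t u v : V}

theorem IsDirectedForest.mono (hF : IsDirectedForest E F) (h : F' ⊆ F) : IsDirectedForest E F' :=
  ⟨fun e he => hF.1 e (h he), fun x y y' hy hy' => hF.2.1 x y y' (h hy) (h hy'),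
    fun x p hp hc => hF.2.2 x p hp (hc.mono fun _ _ hxy => h hxy)⟩

theorem isDirectedForest_empty : IsDirectedForest E ∅ :=
  ⟨by simp, by simp, fun x p hp hc => by
    cases p with
    | nil => exact hp rfl
    | cons c q => exact Finset.notMem_empty _ hc.1⟩

theorem IsDirectedForest.swap_notMem (hF : IsDirectedForest E F) (hst : (s, t) ∈ F) :
    (t, s) ∉ F :=
  fun hts => hF.2.2 s [t, s] (by simp) ⟨hst, hts, rfl⟩

theorem IsDirectedForest.subset_of_edgeRel (hF : IsDirectedForest (edgeRel ED) F) : F ⊆ ED :=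
  fun e he => hF.1 e he

theorem IsDirectedForest.edgeRel_of_subset (hF : IsDirectedForest E F) (h : F ⊆ ED) :
    IsDirectedForest (edgeRel ED) F :=
  ⟨fun _ he => h he, hF.2⟩

theorem isDirectedForest_erase_iff {e : V × V} :
    IsDirectedForest (edgeRel (ED.erase e)) F ↔ IsDirectedForest (edgeRel ED) F ∧ e ∉ F := by
  refine ⟨fun hF => ?_, fun ⟨hF, he⟩ => hF.edgeRel_of_subset
    (Finset.subset_erase.2 ⟨hF.subset_of_edgeRel, he⟩)⟩
  obtain ⟨hsub, he⟩ := Finset.subset_erase.1 hF.subset_of_edgeRel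
  exact ⟨hF.edgeRel_of_subset hsub, he⟩

variable {G : SimpleGraph V}

/-- In a digraph whose underlying graph is acyclic, the only directed cycles are 2-cycles. -/
theorem isDirectedForest_of_isAcyclic (hG : G.IsAcyclic) (hE : ∀ x y, E x y → G.Adj x y)
    (hFE : ∀ e ∈ F, E e.1 e.2) (hin : ∀ x y y', (y, x) ∈ F → (y', x) ∈ F → y = y')
    (hasymm : ∀ x y, (x, y) ∈ F → (y, x) ∉ F) : IsDirectedForest E F :=
  ⟨hFE, hin, fun _ _ hp =>
    not_isDipath_self_of_isAcyclic hG (fun x y hxy => hE x y (hFE _ hxy)) hasymm hp⟩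

theorem IsDirectedForest.insert (hG : G.IsAcyclic) (hE : ∀ x y, E x y → G.Adj x y)
    (hF : IsDirectedForest E F) (hst : E s t) (hin : ∀ z, (z, t) ∉ F) (hts : (t, s) ∉ F) :
    IsDirectedForest E (insert (s, t) F) := by
  have hne : s ≠ t := (hE s t hst).ne
  have hindeg := hF.2.1
  have hasymm : ∀ x y, (x, y) ∈ F → (y, x) ∉ F := fun _ _ => hF.swap_notMem
  refine isDirectedForest_of_isAcyclic hG hE ?_ ?_ ?_
  · simpa [hst] using hF.1
  · simp only [Finset.mem_insert, Prod.mk.injEq]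
    grind
  · simp only [Finset.mem_insert, Prod.mk.injEq]
    grind

def linkEdges (ED : Finset (V × V)) (s t : V) : Finset (V × V) :=
  ED.filter fun e => e.2 ≠ t ∧ e ≠ (t, s)

theorem isDirectedForest_linkEdges_iff (hG : G.IsAcyclic)
    (hED : ∀ x y, (x, y) ∈ ED → G.Adj x y) (hst : (s, t) ∈ ED) :
    IsDirectedForest (edgeRel (linkEdges ED s t)) F ↔
      (s, t) ∉ F ∧ IsDirectedForest (edgeRel ED) (insert (s, t) F) := by
  constructor
  · intro hF
    have hlink : ∀ e ∈ F, e ∈ ED ∧ e.2 ≠ t ∧ e ≠ (t, s) :=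
      fun e he => Finset.mem_filter.1 (hF.subset_of_edgeRel he)
    refine ⟨fun h => (hlink _ h).2.1 rfl, ?_⟩
    exact (hF.edgeRel_of_subset fun e he => (hlink e he).1).insert hG hED hst
      (fun z hz => (hlink _ hz).2.1 rfl) (fun h => (hlink _ h).2.2 rfl)
  · rintro ⟨hstF, hF⟩
    refine (hF.mono (Finset.subset_insert _ _)).edgeRel_of_subset fun ⟨a, b⟩ hab =>
      Finset.mem_filter.2 ⟨hF.subset_of_edgeRel (Finset.mem_insert_of_mem hab), ?_, ?_⟩
    · rintro rfl
      have has : a = s := hF.2.1 b a s (Finset.mem_insert_of_mem hab) (Finset.mem_insert_self _ _)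
      exact hstF (has ▸ hab)
    · rintro ⟨rfl, rfl⟩
      exact hF.swap_notMem (Finset.mem_insert_self _ _) (Finset.mem_insert_of_mem hab)

theorem isSheddingVertex_of_two_cycle (hG : G.IsAcyclic) (hED : ∀ x y, (x, y) ∈ ED → G.Adj x y)
    (huv : (u, v) ∈ ED) (hin : ∀ z, (z, v) ∈ ED → z = u) :
    IsSheddingVertex (IsDirectedForest (edgeRel ED)) (v, u) := by
  refine .of_exchange (w := (u, v)) (by simp [(hED u v huv).ne]) fun F hvuF hF => ?_
  have huvF : (u, v) ∉ F :=
    fun h => hF.swap_notMem (Finset.mem_insert_self _ _) (Finset.mem_insert_of_mem h)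
  refine ⟨huvF, (hF.mono (Finset.subset_insert _ _)).insert hG hED huv (fun z hz => ?_) hvuF⟩
  exact huvF (hin z (hF.subset_of_edgeRel (Finset.mem_insert_of_mem hz)) ▸ hz)

theorem isSheddingVertex_of_in_edge (hG : G.IsAcyclic) (hED : ∀ x y, (x, y) ∈ ED → G.Adj x y)
    {y : V} (hvu : (v, u) ∈ ED) (huv : (u, v) ∉ ED) (hyv : y ≠ v) :
    IsSheddingVertex (IsDirectedForest (edgeRel ED)) (y, u) := by
  refine .of_exchange (w := (v, u)) (by simpa using hyv.symm) fun F hyuF hF => ?_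
  have hin : ∀ z, (z, u) ∉ F := fun z hz =>
    hyuF (hF.2.1 u z y (Finset.mem_insert_of_mem hz) (Finset.mem_insert_self _ _) ▸ hz)
  exact ⟨hin v, (hF.mono (Finset.subset_insert _ _)).insert hG hED hvu hin
    fun h => huv (hF.subset_of_edgeRel (Finset.mem_insert_of_mem h))⟩

theorem vertexDecomposable_of_isSheddingVertex (hG : G.IsAcyclic)
    (hED : ∀ x y, (x, y) ∈ ED → G.Adj x y) (hst : (s, t) ∈ ED)
    (hshed : IsSheddingVertex (IsDirectedForest (edgeRel ED)) (s, t))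
    (hdel : VertexDecomposable (IsDirectedForest (edgeRel (ED.erase (s, t)))))
    (hlink : VertexDecomposable (IsDirectedForest (edgeRel (linkEdges ED s t)))) :
    VertexDecomposable (IsDirectedForest (edgeRel ED)) :=
  .shed _ (s, t) hshed (hdel.of_iff fun _ => isDirectedForest_erase_iff)
    (hlink.of_iff fun _ => isDirectedForest_linkEdges_iff hG hED hst)

theorem vertexDecomposable_of_cone_edge (hG : G.IsAcyclic)
    (hED : ∀ x y, (x, y) ∈ ED → G.Adj x y) (hst : (s, t) ∈ ED) (hts : (t, s) ∉ ED)
    (hin : ∀ z, (z, t) ∈ ED → z = s)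
    (hdel : VertexDecomposable (IsDirectedForest (edgeRel (ED.erase (s, t))))) :
    VertexDecomposable (IsDirectedForest (edgeRel ED)) := by
  refine .of_cone (s, t) (hdel.of_iff fun _ => isDirectedForest_erase_iff) fun F =>
    ⟨fun hF => hF.mono (Finset.erase_subset _ _), fun hF => ?_⟩
  refine (hF.insert hG hED hst (fun z hz => ?_) fun h => hts (hF.subset_of_edgeRel h)).mono
    (Finset.insert_erase_subset _ _)
  obtain ⟨hne, hz⟩ := Finset.mem_erase.1 hz
  exact hne (by rw [hin z (hF.subset_of_edgeRel (Finset.mem_erase_of_ne_of_mem hne hz))])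

theorem exists_leaf_of_isAcyclic [Finite V] (hG : G.IsAcyclic)
    (hED : ∀ x y, (x, y) ∈ ED → G.Adj x y) (hne : ED.Nonempty) :
    ∃ u v, ((u, v) ∈ ED ∨ (v, u) ∈ ED) ∧ ∀ z, (z, v) ∈ ED → z = u := by
  obtain ⟨⟨a, b⟩, hab⟩ := hne
  have hH : (SimpleGraph.fromRel (edgeRel ED)).IsAcyclic :=
    hG.anti fun x y hxy => hxy.2.elim (hED x y) fun h => (hED y x h).symm
  obtain ⟨u, v, hvu, huniq⟩ := hH.exists_adj_forall_adj_eq ⟨(hED a b hab).ne, .inl hab⟩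
  exact ⟨u, v, hvu.2.symm, fun z hz => huniq z ⟨(hED z v hz).ne', .inr hz⟩⟩

theorem exists_isSheddingVertex_or_cone_edge [Finite V] (hG : G.IsAcyclic)
    (hED : ∀ x y, (x, y) ∈ ED → G.Adj x y) (hne : ED.Nonempty) :
    ∃ s t, (s, t) ∈ ED ∧ (IsSheddingVertex (IsDirectedForest (edgeRel ED)) (s, t) ∨
      (t, s) ∉ ED ∧ ∀ z, (z, t) ∈ ED → z = s) := by
  obtain ⟨u, v, huv, hin⟩ := exists_leaf_of_isAcyclic hG hED hne
  by_cases hvu : (v, u) ∈ ED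
  · by_cases huv' : (u, v) ∈ ED
    · exact ⟨v, u, hvu, .inl (isSheddingVertex_of_two_cycle hG hED huv' hin)⟩
    by_cases hy : ∃ y ≠ v, (y, u) ∈ ED
    · obtain ⟨y, hyv, hyu⟩ := hy
      exact ⟨y, u, hyu, .inl (isSheddingVertex_of_in_edge hG hED hvu huv' hyv)⟩
    exact ⟨v, u, hvu, .inr ⟨huv', fun z hz => by_contra fun h => hy ⟨z, h, hz⟩⟩⟩
  · exact ⟨u, v, huv.resolve_right hvu, .inr ⟨hvu, hin⟩⟩

theorem vertexDecomposable_isDirectedForest_of_isAcyclic [Finite V] (hG : G.IsAcyclic)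
    (ED : Finset (V × V)) (hED : ∀ x y, (x, y) ∈ ED → G.Adj x y) :
    VertexDecomposable (IsDirectedForest (edgeRel ED)) := by
  induction ED using Finset.strongInduction with
  | H ED ih =>
  have ih' : ∀ ED' ⊂ ED, VertexDecomposable (IsDirectedForest (edgeRel ED')) :=
    fun ED' h => ih ED' h fun x y hxy => hED x y (h.subset hxy)
  rcases ED.eq_empty_or_nonempty with rfl | hne
  · exact .ofSimplex _ ∅ fun F => ⟨IsDirectedForest.subset_of_edgeRel,
      fun h => by rw [Finset.subset_empty.1 h]; exact isDirectedForest_empty⟩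
  obtain ⟨s, t, hst, hshed | ⟨hts, hin⟩⟩ := exists_isSheddingVertex_or_cone_edge hG hED hne
  · exact vertexDecomposable_of_isSheddingVertex hG hED hst hshed (ih' _ (Finset.erase_ssubset hst))
      (ih' _ (Finset.filter_ssubset.2 ⟨_, hst, by simp⟩))
  · exact vertexDecomposable_of_cone_edge hG hED hst hts hin (ih' _ (Finset.erase_ssubset hst))

end Forest

/-- If the digraph `E` is essentially a tree (replacing directed edges, or pairs of
opposite directed edges, by undirected edges yields a tree `G`), then the complex of
directed trees `Δ(E)` is vertex decomposable. -/
theorem forestComplex_vertexDecomposable_of_tree {V : Type} [Fintype V] [DecidableEq V]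
    (E : V → V → Prop) (G : SimpleGraph V)
    (hEG : ∀ x y : V, G.Adj x y ↔ E x y ∨ E y x) (hG : G.IsTree) :
    VertexDecomposable (fun F : Finset (V × V) => IsDirectedForest E F) := by
  classical
  have hE : edgeRel (Finset.univ.filter fun e : V × V => E e.1 e.2) = E := by
    funext x y
    simp [edgeRel]
  rw [← hE]
  exact vertexDecomposable_isDirectedForest_of_isAcyclic hG.isAcyclic _
    fun x y hxy => (hEG x y).2 (.inl (by simpa [edgeRel] using hxy))
end
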